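/- Let M be a nonempty finite set of items, let n agents have entitlements b_1, …, b_n with b_i > 0 and Σ_i b_i = 1, and let each valuation v_i be monotone (S ⊆ T implies v_i(S) ≤ v_i(T)) with v_i(∅) = 0. Suppose the allocation (A_1, …, A_n), a partition of M, is a competitive equilibrium: there exist nonnegative item prices p : M → ℝ such that for every agent i, p(A_i) ≤ b_i, and every set S ⊆ M with p(S) ≤ b_i satisfies v_i(S) ≤ v_i(A_i). Then every agent receives at least her anyprice share: v_i(A_i) ≥ APS(v_i, b_i) for every i, where APS(v, b) is the infimum over nonnegative price vectors q : M → ℝ with Σ_{e ∈ M} q(e) = 1 of the maximum of v(S) over all S ⊆ M with q(S) ≤ b. -/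

import Mathlib

/-!
Raising the equilibrium prices `p` to a price vector `q ≥ p` with total `1` (possible because
`p(M) ≤ ∑ p(Aᵢ) ≤ ∑ bᵢ = 1`) only shrinks every agent's budget set. Under `q`, each bundle
agent `i` can afford was already affordable under `p`, so it is worth at most `vᵢ(Aᵢ)`; the
anyprice share, an infimum over all such `q`, is therefore at most `vᵢ(Aᵢ)`.
-/

open Finset

theorem Finset.sum_le_sum_sum_of_forall_exists_mem {ι α M : Type*} [Fintype ι] [Fintype α]
    [AddCommMonoid M] [PartialOrder M] [IsOrderedAddMonoid M] {f : α → M} (hf : 0 ≤ f)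
    (A : ι → Finset α) (hA : ∀ e, ∃ i, e ∈ A i) :
    ∑ e, f e ≤ ∑ i, ∑ e ∈ A i, f e := by
  classical
  calc ∑ e, f e ≤ ∑ e, ∑ i, if e ∈ A i then f e else 0 := by
        refine sum_le_sum fun e _ => ?_
        obtain ⟨i, hi⟩ := hA e
        calc f e = if e ∈ A i then f e else 0 := (if_pos hi).symm
          _ ≤ _ := single_le_sum (f := fun j => if e ∈ A j then f e else 0)
                (fun j _ => by split_ifs; exacts [hf e, le_rfl]) (mem_univ i)
    _ = ∑ i, ∑ e ∈ A i, f e := by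
        rw [sum_comm]
        simp only [sum_ite_mem, univ_inter]

theorem exists_le_sum_eq_of_sum_le {α M : Type*} [Fintype α] [Nonempty α] [DecidableEq α]
    [AddCommGroup M] [PartialOrder M] [IsOrderedAddMonoid M] {p : α → M} {s : M}
    (hp : ∑ e, p e ≤ s) : ∃ q, p ≤ q ∧ ∑ e, q e = s := by
  obtain ⟨e₀⟩ := ‹Nonempty α›
  refine ⟨p + Pi.single e₀ (s - ∑ e, p e), le_add_of_nonneg_right ?_, ?_⟩
  · exact Pi.single_nonneg.mpr (sub_nonneg.mpr hp)
  · simp [sum_add_distrib]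

section AnypriceShare

variable {α : Type*}

def affordableValues (v : Finset α → ℝ) (q : α → ℝ) (b : ℝ) : Set ℝ :=
  {u | ∃ S : Finset α, ∑ e ∈ S, q e ≤ b ∧ u = v S}

/-- `APS(v, b)`. For `0 ≤ b` each `sSup` is a maximum over a finite nonempty set, so no junk
value of `sSup` enters. -/
noncomputable def anypriceShare [Fintype α] (v : Finset α → ℝ) (b : ℝ) : ℝ :=
  sInf {t | ∃ q : α → ℝ, (∀ e, 0 ≤ q e) ∧ ∑ e, q e = 1 ∧ t = sSup (affordableValues v q b)}

variable {v : Finset α → ℝ} {q : α → ℝ} {b : ℝ}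

theorem affordableValues_finite [Finite α] : (affordableValues v q b).Finite :=
  (Set.finite_range v).subset fun _ ⟨S, _, hu⟩ => ⟨S, hu.symm⟩

theorem apply_empty_mem_affordableValues (hb : 0 ≤ b) : v ∅ ∈ affordableValues v q b :=
  ⟨∅, by simpa using hb, rfl⟩

theorem apply_empty_le_sSup_affordableValues [Finite α] (hb : 0 ≤ b) :
    v ∅ ≤ sSup (affordableValues v q b) :=
  le_csSup affordableValues_finite.bddAbove (apply_empty_mem_affordableValues hb)

theorem sSup_affordableValues_le_of_le {p : α → ℝ} {x : ℝ} (hpq : p ≤ q) (hb : 0 ≤ b)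
    (h : ∀ S : Finset α, ∑ e ∈ S, p e ≤ b → v S ≤ x) : sSup (affordableValues v q b) ≤ x :=
  csSup_le ⟨_, apply_empty_mem_affordableValues hb⟩ fun _ ⟨S, hS, hu⟩ =>
    hu ▸ h S ((sum_le_sum fun e _ => hpq e).trans hS)

theorem anypriceShare_le [Fintype α] (hb : 0 ≤ b) (hq : ∀ e, 0 ≤ q e) (hq₁ : ∑ e, q e = 1) :
    anypriceShare v b ≤ sSup (affordableValues v q b) :=
  csInf_le ⟨v ∅, fun _ ⟨_, _, _, ht⟩ => ht ▸ apply_empty_le_sSup_affordableValues hb⟩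
    ⟨q, hq, hq₁, rfl⟩

end AnypriceShare

theorem stmt_4 (n m : ℕ) (hm : 0 < m) (b : Fin n → ℝ)
    (hb : ∀ i, 0 < b i) (hbsum : ∑ i, b i = 1)
    (v : Fin n → Finset (Fin m) → ℝ)
    (A : Fin n → Finset (Fin m))
    (hcover : ∀ e, ∃ i, e ∈ A i)
    (p : Fin m → ℝ) (hp : ∀ e, 0 ≤ p e)
    (hafford : ∀ i, ∑ e ∈ A i, p e ≤ b i)
    (hbest : ∀ i, ∀ S : Finset (Fin m), ∑ e ∈ S, p e ≤ b i → v i S ≤ v i (A i)) :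
    ∀ i, sInf {t : ℝ | ∃ q : Fin m → ℝ, (∀ e, 0 ≤ q e) ∧ (∑ e, q e = 1) ∧
        t = sSup {u : ℝ | ∃ S : Finset (Fin m), (∑ e ∈ S, q e) ≤ b i ∧ u = v i S}}
      ≤ v i (A i) := by
  intro i
  have : Nonempty (Fin m) := Fin.pos_iff_nonempty.mp hm
  have hp_total : ∑ e, p e ≤ 1 := calc
    ∑ e, p e ≤ ∑ j, ∑ e ∈ A j, p e := sum_le_sum_sum_of_forall_exists_mem hp A hcover
    _ ≤ ∑ j, b j := sum_le_sum fun j _ => hafford j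
    _ = 1 := hbsum
  obtain ⟨q, hpq, hq₁⟩ := exists_le_sum_eq_of_sum_le hp_total
  calc anypriceShare (v i) (b i)
      ≤ sSup (affordableValues (v i) q (b i)) :=
        anypriceShare_le (hb i).le (fun e => (hp e).trans (hpq e)) hq₁
    _ ≤ v i (A i) := sSup_affordableValues_le_of_le hpq (hb i).le (hbest i)
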